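/- arXiv:2605.21846 — 7 statements merged into one kernel-verified Lean document; each statement's English description precedes it below -/
import Mathlib

section
/- Let B, B' ∈ ℝ^{p×p} be invertible, let A₁, A₁' ∈ ℝ^{p×p}, and let σ, σ' > 0. Then B⁻¹ A₁ = B'⁻¹ A₁' and σ² · B⁻¹ B⁻ᵀ = σ'² · B'⁻¹ B'⁻ᵀ hold if and only if there exist an orthogonal matrix Q ∈ ℝ^{p×p} and a scalar c > 0 such that B' = c · Q · B, A₁' = c · Q · A₁, and σ' = c · σ. -/
/-!
Both directions pass through `M = B' B⁻¹`, the matrix carrying one structural model to the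
other. Equal transition matrices say `A₁' = M A₁`; multiplying the covariance identity by `B'`
on the left and `B'ᵀ` on the right turns it into `σ² M Mᵀ = σ'² I`, i.e. `M = c Q` with
`c = σ' / σ` and `Q` orthogonal.
-/

open Matrix

namespace Matrix

variable {n R : Type*} [Fintype n] [DecidableEq n] [Field R]

theorem inv_smul_mul_of_transpose_mul_self_eq_one {Q B : Matrix n n R} {c : R}
    (hQ : Qᵀ * Q = 1) (hB : IsUnit B.det) (hc : c ≠ 0) :
    (c • (Q * B))⁻¹ = c⁻¹ • (B⁻¹ * Qᵀ) := by
  apply inv_eq_right_inv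
  rw [Matrix.smul_mul, Matrix.mul_smul, smul_smul, mul_inv_cancel₀ hc, one_smul, mul_assoc,
    ← mul_assoc B, mul_nonsing_inv B hB, one_mul, mul_eq_one_comm.mp hQ]

theorem inv_smul_mul_mul_smul_mul {Q B : Matrix n n R} {c : R}
    (hQ : Qᵀ * Q = 1) (hB : IsUnit B.det) (hc : c ≠ 0) (A : Matrix n n R) :
    (c • (Q * B))⁻¹ * (c • (Q * A)) = B⁻¹ * A := by
  rw [inv_smul_mul_of_transpose_mul_self_eq_one hQ hB hc, Matrix.smul_mul, Matrix.mul_smul,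
    smul_smul, inv_mul_cancel₀ hc, one_smul, mul_assoc, ← mul_assoc Qᵀ, hQ, one_mul]

theorem inv_mul_inv_transpose_smul_mul {Q B : Matrix n n R} {c : R}
    (hQ : Qᵀ * Q = 1) (hB : IsUnit B.det) (hc : c ≠ 0) :
    (c • (Q * B))⁻¹ * ((c • (Q * B))⁻¹)ᵀ = (c ^ 2)⁻¹ • (B⁻¹ * B⁻¹ᵀ) := by
  rw [inv_smul_mul_of_transpose_mul_self_eq_one hQ hB hc, transpose_smul, transpose_mul,
    transpose_transpose, Matrix.smul_mul, Matrix.mul_smul, smul_smul, mul_assoc B⁻¹,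
    ← mul_assoc Qᵀ, hQ, one_mul, ← sq, inv_pow]

theorem smul_mul_inv_mul_transpose_eq_smul_one {B B' : Matrix n n R} (hB' : IsUnit B'.det)
    {s t : R} (h : s • (B⁻¹ * B⁻¹ᵀ) = t • (B'⁻¹ * B'⁻¹ᵀ)) :
    s • (B' * B⁻¹ * (B' * B⁻¹)ᵀ) = t • 1 :=
  calc s • (B' * B⁻¹ * (B' * B⁻¹)ᵀ) = B' * (s • (B⁻¹ * B⁻¹ᵀ)) * B'ᵀ := by
        rw [transpose_mul, Matrix.mul_smul, Matrix.smul_mul, mul_assoc, mul_assoc,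
          mul_assoc]
    _ = B' * (t • (B'⁻¹ * B'⁻¹ᵀ)) * B'ᵀ := by rw [h]
    _ = t • 1 := by
        rw [Matrix.mul_smul, Matrix.smul_mul, ← mul_assoc, mul_nonsing_inv B' hB', one_mul,
          ← transpose_mul, mul_nonsing_inv B' hB', transpose_one]

theorem transpose_mul_self_eq_one_of_mul_transpose_eq_sq_smul {M : Matrix n n R} {c : R}
    (hc : c ≠ 0) (hM : M * Mᵀ = c ^ 2 • 1) : (c⁻¹ • M)ᵀ * (c⁻¹ • M) = 1 := by
  rw [mul_eq_one_comm, transpose_smul, Matrix.smul_mul, Matrix.mul_smul, smul_smul, hM, smul_smul,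
    ← sq, inv_pow, inv_mul_cancel₀ (pow_ne_zero 2 hc), one_smul]

end Matrix

/-- **Orthogonal characterization of observational equivalence** (Theorem 3.2).
Two admissible structural VAR(1) models `(B, A₁, σ)` and `(B', A₁', σ')` induce the same
reduced-form parameters `Φ = B⁻¹ A₁` and `Σᵤ = σ² B⁻¹ B⁻ᵀ` if and only if they are related
by an orthogonal transformation `Q` and a positive global scale `c`. -/
theorem obs_equiv_orthogonal_characterization (p : ℕ)
    (B B' A₁ A₁' : Matrix (Fin p) (Fin p) ℝ)
    (hB : IsUnit B.det) (hB' : IsUnit B'.det)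
    (σ σ' : ℝ) (hσ : 0 < σ) (hσ' : 0 < σ') :
    (B⁻¹ * A₁ = B'⁻¹ * A₁' ∧
      σ ^ 2 • (B⁻¹ * (B⁻¹)ᵀ) = σ' ^ 2 • (B'⁻¹ * (B'⁻¹)ᵀ)) ↔
    ∃ (Q : Matrix (Fin p) (Fin p) ℝ) (c : ℝ), Qᵀ * Q = 1 ∧ 0 < c ∧
      B' = c • (Q * B) ∧ A₁' = c • (Q * A₁) ∧ σ' = c * σ := by
  constructor
  · rintro ⟨hΦ, hCov⟩
    set c := σ' / σ
    have hc : 0 < c := div_pos hσ' hσ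
    have hM : B' * B⁻¹ * (B' * B⁻¹)ᵀ = c ^ 2 • 1 := by
      have h := smul_mul_inv_mul_transpose_eq_smul_one hB' hCov
      rw [div_pow, div_eq_inv_mul, ← smul_smul, ← h, smul_smul, inv_mul_cancel₀ (by positivity),
        one_smul]
    have hcQ : c • (c⁻¹ • (B' * B⁻¹)) = B' * B⁻¹ := smul_inv_smul₀ hc.ne' _
    refine ⟨c⁻¹ • (B' * B⁻¹), c,
      transpose_mul_self_eq_one_of_mul_transpose_eq_sq_smul hc.ne' hM, hc, ?_, ?_, ?_⟩
    · rw [← Matrix.smul_mul, hcQ, mul_assoc, nonsing_inv_mul B hB, mul_one]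
    · rw [← Matrix.smul_mul, hcQ, mul_assoc, hΦ, ← mul_assoc, mul_nonsing_inv B' hB',
        one_mul]
    · exact (div_mul_cancel₀ σ' hσ.ne').symm
  · rintro ⟨Q, c, hQ, hc, rfl, rfl, rfl⟩
    refine ⟨(inv_smul_mul_mul_smul_mul hQ hB hc.ne' A₁).symm, ?_⟩
    rw [inv_mul_inv_transpose_smul_mul hQ hB hc.ne', smul_smul, mul_pow, mul_right_comm,
      mul_inv_cancel₀ (pow_ne_zero 2 hc.ne'), one_mul]
end

section
/- Let B, B' ∈ ℝ^{p×p} be invertible, let A₁, A₁' ∈ ℝ^{p×p}, and let σ, σ' > 0. Then B⁻¹ A₁ = B'⁻¹ A₁' and σ'² · B'⁻¹ B'⁻ᵀ = a · σ² · B⁻¹ B⁻ᵀ for some a > 0 hold if and only if there exist an orthogonal matrix Q ∈ ℝ^{p×p} and a scalar c > 0 such that B' = c · Q · B and A₁' = c · Q · A₁ (with no condition relating σ' to σ). -/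
/-!
Since `B⁻¹ B⁻ᵀ = (Bᵀ B)⁻¹`, proportional residual covariances say exactly that the Gram matrices
`B'ᵀ B'` and `Bᵀ B` are proportional, say `B'ᵀ B' = c² Bᵀ B`; and two invertible matrices have equal
Gram matrices precisely when they differ by an orthogonal factor on the left, namely
`Q = c⁻¹ B' B⁻¹`. Given `B'`, equality of the transition matrices pins down `A₁' = B' B⁻¹ A₁ = c Q A₁`.
-/

open Matrix

theorem exists_pos_smul_smul_eq_iff {K M : Type*} [Field K] [LinearOrder K] [IsStrictOrderedRing K]
    [AddCommGroup M] [Module K M] {s s' : K} (hs : 0 < s) (hs' : 0 < s') {x x' : M} :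
    (∃ a : K, 0 < a ∧ s' • x' = a • s • x) ↔ ∃ k : K, 0 < k ∧ x' = k • x := by
  constructor
  · rintro ⟨a, ha, h⟩
    refine ⟨s'⁻¹ * a * s, by positivity, ?_⟩
    rw [mul_smul, mul_smul, ← h, inv_smul_smul₀ hs'.ne']
  · rintro ⟨k, hk, rfl⟩
    refine ⟨s' * k / s, by positivity, ?_⟩
    rw [smul_smul, smul_smul, div_mul_cancel₀ _ hs.ne']

namespace Matrix

variable {n : Type*} [Fintype n] [DecidableEq n]

section CommRing

variable {R : Type*} [CommRing R]

theorem nonsing_inv_mul_transpose_nonsing_inv (B : Matrix n n R) :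
    B⁻¹ * B⁻¹ᵀ = (Bᵀ * B)⁻¹ := by
  rw [mul_inv_rev, transpose_nonsing_inv]

theorem isUnit_det_transpose_mul_self {B : Matrix n n R} (hB : IsUnit B.det) :
    IsUnit (Bᵀ * B).det := by
  rw [det_mul, det_transpose]
  exact hB.mul hB

theorem transpose_mul_self_eq_iff_exists_orthogonal {B B' : Matrix n n R} (hB : IsUnit B.det) :
    B'ᵀ * B' = Bᵀ * B ↔ ∃ Q : Matrix n n R, Qᵀ * Q = 1 ∧ B' = Q * B := by
  constructor
  · intro h
    refine ⟨B' * B⁻¹, ?_, (nonsing_inv_mul_cancel_right B B' hB).symm⟩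
    calc (B' * B⁻¹)ᵀ * (B' * B⁻¹) = B⁻¹ᵀ * (B'ᵀ * B') * B⁻¹ := by
          simp only [transpose_mul, Matrix.mul_assoc]
      _ = (B * B⁻¹)ᵀ * (B * B⁻¹) := by
          simp only [h, transpose_mul, Matrix.mul_assoc]
      _ = 1 := by rw [mul_nonsing_inv B hB, transpose_one, Matrix.one_mul]
  · rintro ⟨Q, hQ, rfl⟩
    rw [transpose_mul, Matrix.mul_assoc, ← Matrix.mul_assoc Qᵀ, hQ, Matrix.one_mul]

end CommRing

section Field

variable {K : Type*} [Field K]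

theorem nonsing_inv_smul {A : Matrix n n K} (hA : IsUnit A.det) {k : K} (hk : k ≠ 0) :
    (k • A)⁻¹ = k⁻¹ • A⁻¹ :=
  inv_eq_left_inv (by rw [smul_mul_smul_comm, inv_mul_cancel₀ hk, nonsing_inv_mul A hA, one_smul])

theorem exists_pos_nonsing_inv_eq_smul_iff [LinearOrder K] [IsStrictOrderedRing K]
    {M N : Matrix n n K} (hM : IsUnit M.det) (hN : IsUnit N.det) :
    (∃ k : K, 0 < k ∧ N⁻¹ = k • M⁻¹) ↔ ∃ k : K, 0 < k ∧ N = k • M := by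
  constructor
  · rintro ⟨k, hk, h⟩
    refine ⟨k⁻¹, inv_pos.2 hk, inv_inj ?_ hN⟩
    rw [h, nonsing_inv_smul hM (inv_ne_zero hk.ne'), inv_inv]
  · rintro ⟨k, hk, rfl⟩
    exact ⟨k⁻¹, inv_pos.2 hk, nonsing_inv_smul hM hk.ne'⟩

end Field

theorem exists_pos_transpose_mul_self_eq_smul_iff {B B' : Matrix n n ℝ} (hB : IsUnit B.det) :
    (∃ k : ℝ, 0 < k ∧ B'ᵀ * B' = k • (Bᵀ * B)) ↔
      ∃ (Q : Matrix n n ℝ) (c : ℝ), Qᵀ * Q = 1 ∧ 0 < c ∧ B' = c • (Q * B) := by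
  constructor
  · rintro ⟨k, hk, h⟩
    have hc : 0 < √k := Real.sqrt_pos.2 hk
    have hgram : ((√k)⁻¹ • B')ᵀ * ((√k)⁻¹ • B') = Bᵀ * B := by
      rw [transpose_smul, smul_mul_smul_comm, h, smul_smul, ← mul_inv, Real.mul_self_sqrt hk.le,
        inv_mul_cancel₀ hk.ne', one_smul]
    obtain ⟨Q, hQ, hQB⟩ :=
      (transpose_mul_self_eq_iff_exists_orthogonal hB).1 hgram
    exact ⟨Q, √k, hQ, hc, by rw [← hQB, smul_smul, mul_inv_cancel₀ hc.ne', one_smul]⟩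
  · rintro ⟨Q, c, hQ, hc, rfl⟩
    refine ⟨c * c, mul_pos hc hc, ?_⟩
    rw [transpose_smul, smul_mul_smul_comm,
      (transpose_mul_self_eq_iff_exists_orthogonal hB).2 ⟨Q, hQ, rfl⟩]

end Matrix

/-- **Scale-free orthogonal characterization** (Theorem 3.5).
Two admissible structural VAR(1) models have the same reduced-form transition matrix and
proportional reduced-form residual covariances if and only if `B' = cQB` and `A₁' = cQA₁`
for some orthogonal `Q` and some `c > 0` (with no condition relating `σ'` to `σ`). -/
theorem scale_free_orthogonal_characterization (p : ℕ)
    (B B' A₁ A₁' : Matrix (Fin p) (Fin p) ℝ)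
    (hB : IsUnit B.det) (hB' : IsUnit B'.det)
    (σ σ' : ℝ) (hσ : 0 < σ) (hσ' : 0 < σ') :
    (B⁻¹ * A₁ = B'⁻¹ * A₁' ∧
      ∃ a : ℝ, 0 < a ∧
        σ' ^ 2 • (B'⁻¹ * (B'⁻¹)ᵀ) = a • (σ ^ 2 • (B⁻¹ * (B⁻¹)ᵀ))) ↔
    ∃ (Q : Matrix (Fin p) (Fin p) ℝ) (c : ℝ), Qᵀ * Q = 1 ∧ 0 < c ∧
      B' = c • (Q * B) ∧ A₁' = c • (Q * A₁) := by
  have := invertibleOfIsUnitDet B' hB'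
  rw [eq_comm, inv_mul_eq_iff_eq_mul_of_invertible,
    exists_pos_smul_smul_eq_iff (pow_pos hσ 2) (pow_pos hσ' 2),
    nonsing_inv_mul_transpose_nonsing_inv, nonsing_inv_mul_transpose_nonsing_inv,
    exists_pos_nonsing_inv_eq_smul_iff (isUnit_det_transpose_mul_self hB)
      (isUnit_det_transpose_mul_self hB'),
    exists_pos_transpose_mul_self_eq_smul_iff hB]
  have hΦ (Q : Matrix (Fin p) (Fin p) ℝ) (c : ℝ) : c • (Q * B) * (B⁻¹ * A₁) = c • (Q * A₁) := by
    rw [smul_mul, Matrix.mul_assoc, mul_nonsing_inv_cancel_left _ _ hB]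
  constructor
  · rintro ⟨hA, Q, c, hQ, hc, rfl⟩
    exact ⟨Q, c, hQ, hc, rfl, hA.trans (hΦ Q c)⟩
  · rintro ⟨Q, c, hQ, hc, rfl, rfl⟩
    exact ⟨(hΦ Q c).symm, Q, c, hQ, hc, rfl⟩
end

section
/- Let B, B' ∈ ℝ^{p×p} be invertible, A₁, A₁' ∈ ℝ^{p×p}, σ, σ' > 0, and η > 0. Let S = [B A₁] ∈ ℝ^{p×2p} and S' = [B' A₁'] ∈ ℝ^{p×2p}, and define α = sup over orthogonal Q ∈ ℝ^{p×p} of tr(Q · S · S'ᵀ). Then the infimum over orthogonal Q ∈ ℝ^{p×p} and scalars c > 0 of ‖S' − c·Q·S‖²_F + η·(σ' − c·σ)² equals ‖S'‖²_F + η·σ'² − (α + η·σ·σ')² / (‖S‖²_F + η·σ²). -/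
/- The objective expands to `‖S'‖²_F + ησ'² + c²(‖S‖²_F + ησ²) − 2c(tr(Q S S'ᵀ) + ησσ')`, since
`‖QS‖_F = ‖S‖_F` for orthogonal `Q`. The orthogonal group is compact, so `α` is attained at some
`Q₀`; minimising the quadratic in `c` at `Q₀` gives `c = (α + ησσ') / (‖S‖²_F + ησ²)`, which is
positive because `α ≥ 0` (take `Q = ±1`). -/

open Matrix

/-- Squared Frobenius norm of a real `p × 2p` matrix, `‖M‖²_F = tr (M Mᵀ)`. -/
noncomputable def frobSq {p : ℕ} (M : Matrix (Fin p) (Fin p ⊕ Fin p) ℝ) : ℝ :=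
  Matrix.trace (M * Mᵀ)

namespace Matrix

variable {m n : Type*} [Fintype m] [Fintype n]

theorem trace_mul_transpose_self_nonneg (M : Matrix m n ℝ) : 0 ≤ trace (M * Mᵀ) :=
  (posSemidef_self_mul_conjTranspose M).trace_nonneg

variable [DecidableEq m]

theorem isCompact_setOf_transpose_mul_self_eq_one :
    IsCompact {Q : Matrix m m ℝ | Qᵀ * Q = 1} := by
  have hbounded : {Q : Matrix m m ℝ | Qᵀ * Q = 1} ⊆
      Set.univ.pi fun _ => Set.univ.pi fun _ => Set.Icc (-1) 1 := by
    intro Q hQ i _ j _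
    have hU : Q ∈ unitaryGroup m ℝ := by
      rwa [mem_unitaryGroup_iff', star_eq_conjTranspose, conjTranspose_eq_transpose_of_trivial]
    exact abs_le.mp (entry_norm_bound_of_unitary hU i j)
  exact (isCompact_univ_pi fun _ => isCompact_univ_pi fun _ => isCompact_Icc).of_isClosed_subset
    (isClosed_eq (by fun_prop) continuous_const) hbounded

theorem exists_trace_mul_eq_of_isLUB (M : Matrix m m ℝ) {α : ℝ}
    (hα : IsLUB {x : ℝ | ∃ Q : Matrix m m ℝ, Qᵀ * Q = 1 ∧ x = trace (Q * M)} α) :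
    ∃ Q : Matrix m m ℝ, Qᵀ * Q = 1 ∧ α = trace (Q * M) := by
  have himage : {x : ℝ | ∃ Q : Matrix m m ℝ, Qᵀ * Q = 1 ∧ x = trace (Q * M)} =
      (fun Q => trace (Q * M)) '' {Q | Qᵀ * Q = 1} := by
    ext x
    simp [eq_comm]
  refine hα.mem_of_isClosed ⟨_, 1, by simp, rfl⟩ ?_
  rw [himage]
  exact (isCompact_setOf_transpose_mul_self_eq_one.image (by fun_prop)).isClosed

theorem trace_sub_smul_mul_mul_transpose {Q : Matrix m m ℝ} (hQ : Qᵀ * Q = 1)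
    (S S' : Matrix m n ℝ) (c : ℝ) :
    trace ((S' - c • (Q * S)) * (S' - c • (Q * S))ᵀ) =
      trace (S' * S'ᵀ) + c ^ 2 * trace (S * Sᵀ) - 2 * c * trace (Q * (S * S'ᵀ)) := by
  have hQS : trace (Q * (S * (Sᵀ * Qᵀ))) = trace (S * Sᵀ) := by
    rw [trace_mul_comm, Matrix.mul_assoc, Matrix.mul_assoc, hQ, Matrix.mul_one]
  have hcross : trace (S' * (Sᵀ * Qᵀ)) = trace (Q * (S * S'ᵀ)) := by
    rw [← trace_transpose]
    simp [transpose_mul, Matrix.mul_assoc]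
  simp only [transpose_sub, transpose_smul, transpose_mul, Matrix.sub_mul, Matrix.mul_sub,
    Matrix.smul_mul, Matrix.mul_smul, trace_sub, trace_smul, smul_eq_mul, Matrix.mul_assoc, hQS, hcross]
  ring

end Matrix

theorem two_mul_mul_sub_sq_mul_le_sq_div {a : ℝ} (ha : 0 < a) (b c : ℝ) :
    2 * c * b - c ^ 2 * a ≤ b ^ 2 / a := by
  rw [le_div_iff₀ ha]
  nlinarith [sq_nonneg (c * a - b)]

theorem obs_alignment_discrepancy_closed_form_general (p : ℕ)
    (σ σ' η : ℝ) (hσ : 0 < σ) (hσ' : 0 < σ') (hη : 0 < η)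
    (S S' : Matrix (Fin p) (Fin p ⊕ Fin p) ℝ)
    (α : ℝ)
    (hα : IsLUB {x : ℝ | ∃ Q : Matrix (Fin p) (Fin p) ℝ,
        Qᵀ * Q = 1 ∧ x = Matrix.trace (Q * (S * S'ᵀ))} α) :
    sInf {x : ℝ | ∃ (Q : Matrix (Fin p) (Fin p) ℝ) (c : ℝ),
        Qᵀ * Q = 1 ∧ 0 < c ∧
        x = frobSq (S' - c • (Q * S)) + η * (σ' - c * σ) ^ 2} =
      frobSq S' + η * σ' ^ 2 -
        (α + η * σ * σ') ^ 2 / (frobSq S + η * σ ^ 2) := by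
  have ha : 0 < frobSq S + η * σ ^ 2 := by
    have hS := trace_mul_transpose_self_nonneg S
    rw [frobSq]
    positivity
  have hα_nonneg : 0 ≤ α := by
    have h₁ := hα.1 ⟨1, by simp, rfl⟩
    have h₂ := hα.1 ⟨-1, by simp, rfl⟩
    simp only [Matrix.one_mul, Matrix.neg_mul, trace_neg] at h₁ h₂
    linarith
  have hβ : 0 < α + η * σ * σ' := by positivity
  have hexpand : ∀ Q : Matrix (Fin p) (Fin p) ℝ, Qᵀ * Q = 1 → ∀ c : ℝ,
      frobSq (S' - c • (Q * S)) + η * (σ' - c * σ) ^ 2 = frobSq S' + η * σ' ^ 2 +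
        c ^ 2 * (frobSq S + η * σ ^ 2) - 2 * c * (trace (Q * (S * S'ᵀ)) + η * σ * σ') := by
    intro Q hQ c
    rw [frobSq, frobSq, frobSq, trace_sub_smul_mul_mul_transpose hQ]
    ring
  obtain ⟨Q₀, hQ₀, hαQ₀⟩ := exists_trace_mul_eq_of_isLUB _ hα
  refine IsLeast.csInf_eq ⟨⟨Q₀, _, hQ₀, div_pos hβ ha, ?_⟩, ?_⟩
  · rw [hexpand Q₀ hQ₀, ← hαQ₀]
    field_simp
    ring
  · rintro x ⟨Q, c, hQ, hc, rfl⟩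
    have htrace : c * trace (Q * (S * S'ᵀ)) ≤ c * α :=
      mul_le_mul_of_nonneg_left (hα.1 ⟨Q, hQ, rfl⟩) hc.le
    have hquad := two_mul_mul_sub_sq_mul_le_sq_div ha (α + η * σ * σ') c
    rw [hexpand Q hQ]
    linarith

/-- **Closed form for the observational alignment discrepancy** (Proposition 3.4).
With `S = [B A₁]`, `S' = [B' A₁']` and
`α = sup {tr (Q S S'ᵀ) : Q orthogonal}`, the infimum over orthogonal `Q` and `c > 0` of
`‖S' − cQS‖²_F + η (σ' − cσ)²` equals
`‖S'‖²_F + η σ'² − (α + η σ σ')² / (‖S‖²_F + η σ²)`. -/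
theorem obs_alignment_discrepancy_closed_form (p : ℕ)
    (B B' A₁ A₁' : Matrix (Fin p) (Fin p) ℝ)
    (hB : IsUnit B.det) (hB' : IsUnit B'.det)
    (σ σ' η : ℝ) (hσ : 0 < σ) (hσ' : 0 < σ') (hη : 0 < η)
    (S S' : Matrix (Fin p) (Fin p ⊕ Fin p) ℝ)
    (hS : S = Matrix.fromCols B A₁) (hS' : S' = Matrix.fromCols B' A₁')
    (α : ℝ)
    (hα : IsLUB {x : ℝ | ∃ Q : Matrix (Fin p) (Fin p) ℝ,
        Qᵀ * Q = 1 ∧ x = Matrix.trace (Q * (S * S'ᵀ))} α) :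
    sInf {x : ℝ | ∃ (Q : Matrix (Fin p) (Fin p) ℝ) (c : ℝ),
        Qᵀ * Q = 1 ∧ 0 < c ∧
        x = frobSq (S' - c • (Q * S)) + η * (σ' - c * σ) ^ 2} =
      frobSq S' + η * σ' ^ 2 -
        (α + η * σ * σ') ^ 2 / (frobSq S + η * σ ^ 2) :=
  obs_alignment_discrepancy_closed_form_general p σ σ' η hσ hσ' hη S S' α hα
end

section
/- Let B, B' ∈ ℝ^{p×p} be invertible, A₁, A₁' ∈ ℝ^{p×p}, σ, σ' > 0, and η > 0. Let S = [B A₁], S' = [B' A₁'] ∈ ℝ^{p×2p}, and suppose S · S'ᵀ = U · D · Vᵀ where U, V ∈ ℝ^{p×p} are orthogonal and D is a diagonal matrix with nonnegative diagonal entries. Set Q* = V·Uᵀ and c* = (tr(D) + η·σ·σ') / (‖S‖²_F + η·σ²). Then c* > 0, Q* is orthogonal, and for every orthogonal Q ∈ ℝ^{p×p} and every c > 0, ‖S' − c*·Q*·S‖²_F + η·(σ' − c*·σ)² ≤ ‖S' − c·Q·S‖²_F + η·(σ' − c·σ)², and the attained value equals ‖S'‖²_F + η·σ'² − (tr(D)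 + η·σ·σ')² / (‖S‖²_F + η·σ²). -/
open Matrix

/-! For orthogonal `Q` the objective expands to
`‖S'‖² + ησ'² − 2c (tr (Q S S'ᵀ) + ησσ') + c² (‖S‖² + ησ²)`.
Since `tr (Q U D Vᵀ) = tr ((Vᵀ Q U) D)` and the diagonal entries of the orthogonal matrix
`Vᵀ Q U` are at most `1`, the trace term is at most `tr D`, with equality at `Q = V Uᵀ`.
What remains is a quadratic in `c`, minimized at its vertex `c*`. -/

section Orthogonal

variable {n : Type*} [Fintype n] [DecidableEq n]

theorem Matrix.transpose_mul_self_eq_one_mul {Q R : Matrix n n ℝ} (hQ : Qᵀ * Q = 1)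
    (hR : Rᵀ * R = 1) : (Q * R)ᵀ * (Q * R) = 1 := by
  rw [transpose_mul, Matrix.mul_assoc, ← Matrix.mul_assoc Qᵀ, hQ, Matrix.one_mul, hR]

theorem Matrix.le_one_of_transpose_mul_self_eq_one {W : Matrix n n ℝ} (hW : Wᵀ * W = 1) (i j : n) :
    W i j ≤ 1 := by
  have hW' : W ∈ unitaryGroup n ℝ := by
    rwa [mem_unitaryGroup_iff', star_eq_conjTranspose, conjTranspose_eq_transpose_of_trivial]
  exact (le_abs_self _).trans (entry_norm_bound_of_unitary hW' i j)

theorem Matrix.trace_mul_diagonal_le_of_transpose_mul_self_eq_one {W : Matrix n n ℝ}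
    (hW : Wᵀ * W = 1) {d : n → ℝ} (hd : ∀ i, 0 ≤ d i) :
    trace (W * diagonal d) ≤ trace (diagonal d) := by
  simp only [trace, diag_apply, mul_diagonal, diagonal_apply_eq]
  exact Finset.sum_le_sum fun i _ =>
    mul_le_of_le_one_left (hd i) (le_one_of_transpose_mul_self_eq_one hW i i)

theorem Matrix.trace_mul_svd_le {Q U V : Matrix n n ℝ} (hQ : Qᵀ * Q = 1) (hU : Uᵀ * U = 1)
    (hV : Vᵀ * V = 1) {d : n → ℝ} (hd : ∀ i, 0 ≤ d i) :
    trace (Q * (U * diagonal d * Vᵀ)) ≤ trace (diagonal d) := by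
  have hVt : Vᵀᵀ * Vᵀ = 1 := by rw [transpose_transpose]; exact mul_eq_one_comm.mp hV
  have hW := transpose_mul_self_eq_one_mul (transpose_mul_self_eq_one_mul hVt hQ) hU
  calc trace (Q * (U * diagonal d * Vᵀ)) = trace (Vᵀ * Q * U * diagonal d) := by
        simp only [← Matrix.mul_assoc]
        rw [trace_mul_comm]
        simp only [Matrix.mul_assoc]
    _ ≤ trace (diagonal d) := trace_mul_diagonal_le_of_transpose_mul_self_eq_one hW hd

theorem Matrix.trace_mul_svd_eq {U V : Matrix n n ℝ} (hU : Uᵀ * U = 1) (hV : Vᵀ * V = 1)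
    (d : n → ℝ) : trace (V * Uᵀ * (U * diagonal d * Vᵀ)) = trace (diagonal d) := by
  rw [Matrix.mul_assoc, ← Matrix.mul_assoc Uᵀ, ← Matrix.mul_assoc Uᵀ, hU, Matrix.one_mul,
    trace_mul_comm, Matrix.mul_assoc, hV, Matrix.mul_one]

end Orthogonal

section Frobenius

variable {m n : Type*} [Fintype m] [Fintype n]

theorem Matrix.trace_mul_transpose_self_nonneg_s6 (M : Matrix m n ℝ) : 0 ≤ trace (M * Mᵀ) := by
  simpa [conjTranspose_eq_transpose_of_trivial] using
    (posSemidef_self_mul_conjTranspose M).trace_nonneg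

theorem Matrix.trace_sub_smul_mul_mul_transpose_s6 [DecidableEq m] (S S' : Matrix m n ℝ)
    {Q : Matrix m m ℝ} (hQ : Qᵀ * Q = 1) (c : ℝ) :
    trace ((S' - c • (Q * S)) * (S' - c • (Q * S))ᵀ) =
      trace (S' * S'ᵀ) - 2 * c * trace (Q * (S * S'ᵀ)) + c ^ 2 * trace (S * Sᵀ) := by
  have hcross : trace (S' * (Q * S)ᵀ) = trace (Q * (S * S'ᵀ)) := by
    rw [← trace_transpose, transpose_mul, transpose_transpose, Matrix.mul_assoc]
  have hsq : trace (Q * S * (Q * S)ᵀ) = trace (S * Sᵀ) := by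
    rw [trace_mul_comm, transpose_mul, Matrix.mul_assoc, ← Matrix.mul_assoc Qᵀ, hQ,
      Matrix.one_mul, trace_mul_comm]
  simp only [transpose_sub, transpose_smul, Matrix.sub_mul, Matrix.mul_sub, Matrix.smul_mul,
    Matrix.mul_smul, trace_sub, trace_smul, smul_eq_mul, hcross, hsq, Matrix.mul_assoc Q S S'ᵀ]
  ring

end Frobenius

theorem two_mul_mul_sub_sq_mul_le_sq_div_s6 {N T g c : ℝ} (hN : 0 < N) (hc : 0 ≤ c)
    (hg : g ≤ T) : 2 * c * g - c ^ 2 * N ≤ T ^ 2 / N := by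
  have key : T ^ 2 / N - (2 * c * g - c ^ 2 * N) = (T - c * N) ^ 2 / N + 2 * c * (T - g) := by
    field_simp
    ring
  rw [← sub_nonneg, key]
  exact add_nonneg (by positivity) (mul_nonneg (by positivity) (sub_nonneg.mpr hg))

theorem obs_alignment_discrepancy_optimizer_general (p : ℕ)
    (σ σ' η : ℝ) (hσ : 0 < σ) (hσ' : 0 < σ') (hη : 0 < η)
    (S S' : Matrix (Fin p) (Fin p ⊕ Fin p) ℝ)
    (U V : Matrix (Fin p) (Fin p) ℝ) (hU : Uᵀ * U = 1) (hV : Vᵀ * V = 1)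
    (d : Fin p → ℝ) (hd : ∀ i, 0 ≤ d i)
    (hSVD : S * S'ᵀ = U * Matrix.diagonal d * Vᵀ)
    (Qstar : Matrix (Fin p) (Fin p) ℝ) (hQstar : Qstar = V * Uᵀ)
    (cstar : ℝ)
    (hcstar : cstar = (Matrix.trace (Matrix.diagonal d) + η * σ * σ') /
        (frobSq S + η * σ ^ 2)) :
    0 < cstar ∧ Qstarᵀ * Qstar = 1 ∧
    (∀ (Q : Matrix (Fin p) (Fin p) ℝ) (c : ℝ), Qᵀ * Q = 1 → 0 < c →
      frobSq (S' - cstar • (Qstar * S)) + η * (σ' - cstar * σ) ^ 2 ≤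
        frobSq (S' - c • (Q * S)) + η * (σ' - c * σ) ^ 2) ∧
    frobSq (S' - cstar • (Qstar * S)) + η * (σ' - cstar * σ) ^ 2 =
      frobSq S' + η * σ' ^ 2 -
        (Matrix.trace (Matrix.diagonal d) + η * σ * σ') ^ 2 /
          (frobSq S + η * σ ^ 2) := by
  have hUt : Uᵀᵀ * Uᵀ = 1 := by rw [transpose_transpose]; exact mul_eq_one_comm.mp hU
  have hQstar_orth : Qstarᵀ * Qstar = 1 := hQstar ▸ transpose_mul_self_eq_one_mul hV hUt
  set T := trace (diagonal d) + η * σ * σ'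
  set N := frobSq S + η * σ ^ 2
  have hN : 0 < N := by
    have hS := trace_mul_transpose_self_nonneg_s6 S
    unfold N frobSq
    positivity
  have hT : 0 < T := by
    have hD : 0 ≤ trace (diagonal d) := by
      rw [trace_diagonal]
      exact Finset.sum_nonneg fun i _ => hd i
    positivity
  have expand : ∀ Q c, Qᵀ * Q = 1 → frobSq (S' - c • (Q * S)) + η * (σ' - c * σ) ^ 2 =
      frobSq S' + η * σ' ^ 2 - 2 * c * (trace (Q * (S * S'ᵀ)) + η * σ * σ') + c ^ 2 * N := by
    intro Q c hQ
    rw [frobSq, trace_sub_smul_mul_mul_transpose_s6 S S' hQ]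
    unfold N frobSq
    ring
  have hvalue : frobSq (S' - cstar • (Qstar * S)) + η * (σ' - cstar * σ) ^ 2 =
      frobSq S' + η * σ' ^ 2 - T ^ 2 / N := by
    rw [expand _ _ hQstar_orth, hQstar, hSVD, trace_mul_svd_eq hU hV, hcstar]
    field_simp
    ring
  refine ⟨hcstar ▸ div_pos hT hN, hQstar_orth, fun Q c hQ hc => ?_, hvalue⟩
  have htrace : trace (Q * (S * S'ᵀ)) ≤ trace (diagonal d) :=
    hSVD ▸ trace_mul_svd_le hQ hU hV hd
  have hquad := two_mul_mul_sub_sq_mul_le_sq_div_s6 hN hc.le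
    (by linarith : trace (Q * (S * S'ᵀ)) + η * σ * σ' ≤ T)
  rw [hvalue, expand Q c hQ]
  linarith

/-- **Optimizers of the observational alignment discrepancy** (Proposition 3.4).
Given a singular value decomposition `S S'ᵀ = U D Vᵀ`, the pair `Q* = V Uᵀ`,
`c* = (tr D + η σ σ') / (‖S‖²_F + η σ²)` minimizes the alignment objective over
orthogonal `Q` and `c > 0`, and the attained value is
`‖S'‖²_F + η σ'² − (tr D + η σ σ')² / (‖S‖²_F + η σ²)`. -/
theorem obs_alignment_discrepancy_optimizer (p : ℕ)
    (B B' A₁ A₁' : Matrix (Fin p) (Fin p) ℝ)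
    (hB : IsUnit B.det) (hB' : IsUnit B'.det)
    (σ σ' η : ℝ) (hσ : 0 < σ) (hσ' : 0 < σ') (hη : 0 < η)
    (S S' : Matrix (Fin p) (Fin p ⊕ Fin p) ℝ)
    (hS : S = Matrix.fromCols B A₁) (hS' : S' = Matrix.fromCols B' A₁')
    (U V : Matrix (Fin p) (Fin p) ℝ) (hU : Uᵀ * U = 1) (hV : Vᵀ * V = 1)
    (d : Fin p → ℝ) (hd : ∀ i, 0 ≤ d i)
    (hSVD : S * S'ᵀ = U * Matrix.diagonal d * Vᵀ)
    (Qstar : Matrix (Fin p) (Fin p) ℝ) (hQstar : Qstar = V * Uᵀ)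
    (cstar : ℝ)
    (hcstar : cstar = (Matrix.trace (Matrix.diagonal d) + η * σ * σ') /
        (frobSq S + η * σ ^ 2)) :
    0 < cstar ∧ Qstarᵀ * Qstar = 1 ∧
    (∀ (Q : Matrix (Fin p) (Fin p) ℝ) (c : ℝ), Qᵀ * Q = 1 → 0 < c →
      frobSq (S' - cstar • (Qstar * S)) + η * (σ' - cstar * σ) ^ 2 ≤
        frobSq (S' - c • (Q * S)) + η * (σ' - c * σ) ^ 2) ∧
    frobSq (S' - cstar • (Qstar * S)) + η * (σ' - cstar * σ) ^ 2 =
      frobSq S' + η * σ' ^ 2 -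
        (Matrix.trace (Matrix.diagonal d) + η * σ * σ') ^ 2 /
          (frobSq S + η * σ ^ 2) :=
  obs_alignment_discrepancy_optimizer_general p σ σ' η hσ hσ' hη S S' U V hU hV d hd hSVD Qstar
    hQstar cstar hcstar
end

section
/- Let Σᵤ ∈ ℝ^{p×p} be positive definite, Φ ∈ ℝ^{p×p}, and let B_can ∈ ℝ^{p×p} satisfy B_canᵀ · B_can = Σᵤ⁻¹ with Γ_can = B_can · Φ. Let B̃ ∈ ℝ^{p×p} be invertible, Ã₁ ∈ ℝ^{p×p}, and σ̃ > 0. Then B̃⁻¹ · Ã₁ = Φ and σ̃² · B̃⁻¹ · B̃⁻ᵀ = Σᵤ hold if and only if there exist an orthogonal matrix Q ∈ ℝ^{p×p} and a scalar c > 0 such that B̃ = c·Q·B_can, Ã₁ = c·Q·Γ_can, and σ̃ = c. -/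
/-!
Since `Σᵤ = (B_canᵀ B_can)⁻¹`, the covariance equation says exactly that `σ̃⁻¹ B̃` and `B_can`
have the same Gram matrix `Mᵀ M`. Two factors of one Gram matrix, the second invertible, differ
by the orthogonal factor `Q = M N⁻¹`; and given `B̃`, the mean equation just says `Ã₁ = B̃ Φ`.
-/

open Matrix

namespace Matrix

variable {n : Type*} [Fintype n] [DecidableEq n]

theorem transpose_mul_self_eq_iff_exists_orthogonal_s9 {R : Type*} [CommRing R]
    {M N : Matrix n n R} (hN : IsUnit N.det) :
    Mᵀ * M = Nᵀ * N ↔ ∃ Q : Matrix n n R, Qᵀ * Q = 1 ∧ M = Q * N := by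
  constructor
  · intro h
    refine ⟨M * N⁻¹, ?_, (nonsing_inv_mul_cancel_right _ _ hN).symm⟩
    calc (M * N⁻¹)ᵀ * (M * N⁻¹) = N⁻¹ᵀ * (Mᵀ * M) * N⁻¹ := by
          rw [transpose_mul]; noncomm_ring
      _ = (N * N⁻¹)ᵀ * (N * N⁻¹) := by
          rw [h, transpose_mul, transpose_nonsing_inv]; noncomm_ring
      _ = 1 := by rw [mul_nonsing_inv _ hN, transpose_one, one_mul]
  · rintro ⟨Q, hQ, rfl⟩
    rw [transpose_mul, Matrix.mul_assoc, ← Matrix.mul_assoc Qᵀ, hQ, Matrix.one_mul]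

variable {K : Type*} [Field K]

theorem smul_inv_mul_inv_transpose {B : Matrix n n K} (hB : IsUnit B.det) {σ : K} (hσ : σ ≠ 0) :
    σ ^ 2 • (B⁻¹ * B⁻¹ᵀ) = ((σ⁻¹ • B)ᵀ * (σ⁻¹ • B))⁻¹ := by
  refine (inv_eq_right_inv ?_).symm
  have hB' : Bᵀ * B⁻¹ᵀ = 1 := by rw [← transpose_mul, nonsing_inv_mul _ hB, transpose_one]
  have hσ2 : σ ^ 2 * (σ⁻¹ * σ⁻¹) = 1 := by field_simp
  calc (σ⁻¹ • B)ᵀ * (σ⁻¹ • B) * σ ^ 2 • (B⁻¹ * B⁻¹ᵀ)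
      = (σ ^ 2 * (σ⁻¹ * σ⁻¹)) • (Bᵀ * ((B * B⁻¹) * B⁻¹ᵀ)) := by
        simp only [transpose_smul, Matrix.smul_mul, Matrix.mul_smul, smul_smul, Matrix.mul_assoc]
    _ = 1 := by rw [hσ2, one_smul, mul_nonsing_inv _ hB, Matrix.one_mul, hB']

theorem smul_inv_mul_inv_transpose_eq_iff {B N : Matrix n n K} (hB : IsUnit B.det)
    (hN : IsUnit N.det) {σ : K} (hσ : σ ≠ 0) :
    σ ^ 2 • (B⁻¹ * B⁻¹ᵀ) = (Nᵀ * N)⁻¹ ↔ ∃ Q : Matrix n n K, Qᵀ * Q = 1 ∧ B = σ • (Q * N) := by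
  have hNN : IsUnit (Nᵀ * N).det := by rw [det_mul, det_transpose]; exact hN.mul hN
  rw [smul_inv_mul_inv_transpose hB hσ]
  refine ⟨fun h => ?_, fun h => ?_⟩
  · obtain ⟨Q, hQ, hBQ⟩ :=
      (transpose_mul_self_eq_iff_exists_orthogonal_s9 hN).1 (inv_inj h.symm hNN).symm
    exact ⟨Q, hQ, (inv_smul_eq_iff₀ hσ).1 hBQ⟩
  · obtain ⟨Q, hQ, hBQ⟩ := h
    rw [(transpose_mul_self_eq_iff_exists_orthogonal_s9 hN).2 ⟨Q, hQ, (inv_smul_eq_iff₀ hσ).2 hBQ⟩]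

end Matrix

/-- **Characterization of the empirical equivalence class via the canonical representative**
(Proposition 4.1, part 2).  A structural representation `(B̃, Ã₁, σ̃)` induces the
reduced-form parameters `(Φ, Σᵤ)` if and only if `B̃ = c Q B_can`, `Ã₁ = c Q Γ_can`, and
`σ̃ = c` for some orthogonal `Q` and some `c > 0`. -/
theorem canonical_representative_orbit (p : ℕ)
    (Sigma_u Phi Bcan Gcan : Matrix (Fin p) (Fin p) ℝ)
    (hSigma : Sigma_u.PosDef)
    (hBcan : Bcanᵀ * Bcan = Sigma_u⁻¹)
    (hGcan : Gcan = Bcan * Phi)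
    (Btil A₁til : Matrix (Fin p) (Fin p) ℝ) (hBtil : IsUnit Btil.det)
    (σtil : ℝ) (hσtil : 0 < σtil) :
    (Btil⁻¹ * A₁til = Phi ∧
      σtil ^ 2 • (Btil⁻¹ * (Btil⁻¹)ᵀ) = Sigma_u) ↔
    ∃ (Q : Matrix (Fin p) (Fin p) ℝ) (c : ℝ), Qᵀ * Q = 1 ∧ 0 < c ∧
      Btil = c • (Q * Bcan) ∧ A₁til = c • (Q * Gcan) ∧ σtil = c := by
  have hSigma_det : IsUnit Sigma_u.det := hSigma.det_pos.ne'.isUnit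
  have hBcan_det : IsUnit Bcan.det := by
    have h := isUnit_nonsing_inv_det _ hSigma_det
    rw [← hBcan, det_mul, det_transpose] at h
    exact isUnit_of_mul_isUnit_left h
  have hSigma_eq : Sigma_u = (Bcanᵀ * Bcan)⁻¹ := by rw [hBcan, nonsing_inv_nonsing_inv _ hSigma_det]
  have := invertibleOfIsUnitDet _ hBtil
  rw [inv_mul_eq_iff_eq_mul_of_invertible, hSigma_eq,
    smul_inv_mul_inv_transpose_eq_iff hBtil hBcan_det hσtil.ne', hGcan]
  constructor
  · rintro ⟨hA, Q, hQ, hB⟩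
    refine ⟨Q, σtil, hQ, hσtil, hB, ?_, rfl⟩
    rw [hA, hB, smul_mul, Matrix.mul_assoc]
  · rintro ⟨Q, c, hQ, -, hB, hA, rfl⟩
    refine ⟨?_, Q, hQ, hB⟩
    rw [hA, hB, smul_mul, Matrix.mul_assoc]
end

section
/- Let B, B' ∈ ℝ^{p×p} be invertible and A₁, A₁' ∈ ℝ^{p×p}, and let S = [B A₁], S' = [B' A₁'] ∈ ℝ^{p×2p}. Then the infimum over orthogonal Q ∈ ℝ^{p×p} and scalars c > 0 of ‖S' − c·Q·S‖²_F equals zero if and only if there exist an orthogonal matrix Q ∈ ℝ^{p×p} and c > 0 such that B' = c·Q·B and A₁' = c·Q·A₁. -/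
open Matrix

/-!
The discrepancy vanishes exactly when `S'` lies in the closure of `{N S | N = cQ}`, since
`frobSq` is continuous and bounds the square of every entry. As `B` is invertible, `N ↦ N S` is
an injective linear map, hence a closed embedding, so `S' = M S` for some `M` in the closure of
the similitudes `cQ`. Every such `M` satisfies `MᵀM = t • 1` with `t ≥ 0`, and `t ≠ 0` because
`M B = B'` is invertible; then `M = √t • (M / √t)` is itself a similitude.
-/

open Filter Topology

section frobSq

variable {p : ℕ}

lemma frobSq_eq_sum_sq (M : Matrix (Fin p) (Fin p ⊕ Fin p) ℝ) :
    frobSq M = ∑ i, ∑ j, M i j ^ 2 := by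
  simp [frobSq, Matrix.trace, Matrix.mul_apply, sq]

lemma frobSq_nonneg (M : Matrix (Fin p) (Fin p ⊕ Fin p) ℝ) : 0 ≤ frobSq M := by
  rw [frobSq_eq_sum_sq]; positivity

lemma sq_apply_le_frobSq (M : Matrix (Fin p) (Fin p ⊕ Fin p) ℝ) (i : Fin p) (j : Fin p ⊕ Fin p) :
    M i j ^ 2 ≤ frobSq M := by
  rw [frobSq_eq_sum_sq]
  calc M i j ^ 2 ≤ ∑ j', M i j' ^ 2 :=
        Finset.single_le_sum (fun _ _ => sq_nonneg _) (Finset.mem_univ j)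
    _ ≤ ∑ i', ∑ j', M i' j' ^ 2 :=
        Finset.single_le_sum (f := fun i' => ∑ j', M i' j' ^ 2)
          (fun _ _ => Finset.sum_nonneg fun _ _ => sq_nonneg _) (Finset.mem_univ i)

lemma continuous_frobSq : Continuous (frobSq (p := p)) :=
  (continuous_id.matrix_mul continuous_id.matrix_transpose).matrix_trace

lemma tendsto_of_tendsto_frobSq_sub {α : Type*} {l : Filter α}
    {a : Matrix (Fin p) (Fin p ⊕ Fin p) ℝ} {y : α → Matrix (Fin p) (Fin p ⊕ Fin p) ℝ}
    (h : Tendsto (fun k => frobSq (a - y k)) l (𝓝 0)) : Tendsto y l (𝓝 a) := by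
  have hsqrt : Tendsto (fun k => √(frobSq (a - y k))) l (𝓝 0) := by
    simpa using h.sqrt
  refine tendsto_pi_nhds.mpr fun i => tendsto_pi_nhds.mpr fun j => ?_
  rw [tendsto_iff_dist_tendsto_zero]
  refine squeeze_zero (fun _ => dist_nonneg) (fun k => ?_) hsqrt
  rw [Real.dist_eq, abs_sub_comm]
  exact Real.abs_le_sqrt (sq_apply_le_frobSq (a - y k) i j)

lemma sInf_image_frobSq_sub_eq_zero_iff {a : Matrix (Fin p) (Fin p ⊕ Fin p) ℝ}
    {T : Set (Matrix (Fin p) (Fin p ⊕ Fin p) ℝ)} (hT : T.Nonempty) :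
    sInf ((fun y => frobSq (a - y)) '' T) = 0 ↔ a ∈ closure T := by
  constructor
  · intro h
    have hsmall (k : ℕ) : ∃ y ∈ T, frobSq (a - y) < 1 / (k + 1) := by
      obtain ⟨_, ⟨y, hyT, rfl⟩, hy⟩ := exists_lt_of_csInf_lt (hT.image _)
        (h.trans_lt (Nat.one_div_pos_of_nat (n := k)))
      exact ⟨y, hyT, hy⟩
    choose y hyT hy using hsmall
    refine mem_closure_of_tendsto (tendsto_of_tendsto_frobSq_sub (l := atTop) ?_)
      (Eventually.of_forall hyT)
    exact squeeze_zero (fun _ => frobSq_nonneg _) (fun k => (hy k).le)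
      tendsto_one_div_add_atTop_nhds_zero_nat
  · intro ha
    have hcont : Continuous fun y => frobSq (a - y) :=
      continuous_frobSq.comp (continuous_const.sub continuous_id)
    have hzero : (0 : ℝ) ∈ closure ((fun y => frobSq (a - y)) '' T) := by
      simpa [frobSq] using mem_closure_image hcont.continuousAt ha
    exact (isGLB_of_mem_closure (Set.forall_mem_image.mpr fun _ _ => frobSq_nonneg _)
      hzero).csInf_eq (hT.image _)

end frobSq

namespace Matrix

lemma isClosedEmbedding_mul_fromCols {𝕜 l m n : Type*} [NontriviallyNormedField 𝕜]
    [CompleteSpace 𝕜] [Fintype l] [Fintype m] [DecidableEq m] {B : Matrix m m 𝕜}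
    (A : Matrix m n 𝕜) (hB : IsUnit B.det) :
    IsClosedEmbedding fun N : Matrix l m 𝕜 => N * fromCols B A := by
  refine LinearMap.isClosedEmbedding_of_injective (f := mulRightLinearMap l 𝕜 (fromCols B A))
    (LinearMap.ker_eq_bot.mpr fun N N' h => ?_)
  simp only [mulRightLinearMap_apply, mul_fromCols, fromCols_ext_iff] at h
  exact mul_left_injective_of_inv B B⁻¹ (mul_nonsing_inv B hB) h.1

variable {n : Type*} [Fintype n] [DecidableEq n]

variable (n) in
def similitudes : Set (Matrix n n ℝ) :=
  {N | ∃ (Q : Matrix n n ℝ) (c : ℝ), Qᵀ * Q = 1 ∧ 0 < c ∧ N = c • Q}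

lemma one_mem_similitudes : (1 : Matrix n n ℝ) ∈ similitudes n :=
  ⟨1, 1, by simp, one_pos, by simp⟩

lemma transpose_mul_self_of_mem_similitudes {N : Matrix n n ℝ} (hN : N ∈ similitudes n) (i : n) :
    Nᵀ * N = (Nᵀ * N) i i • 1 := by
  obtain ⟨Q, c, hQ, -, rfl⟩ := hN
  simp [hQ, smul_smul]

lemma isClosed_setOf_transpose_mul_self_eq_smul_one (i : n) :
    IsClosed {M : Matrix n n ℝ | Mᵀ * M = (Mᵀ * M) i i • 1} := by
  have hcont : Continuous fun M : Matrix n n ℝ => Mᵀ * M :=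
    continuous_id.matrix_transpose.matrix_mul continuous_id
  exact isClosed_eq hcont (((continuous_apply i).comp ((continuous_apply i).comp hcont)).smul
    continuous_const)

lemma mem_similitudes_of_transpose_mul_self_eq_smul_one {M : Matrix n n ℝ} {t : ℝ} (ht : 0 < t)
    (hM : Mᵀ * M = t • 1) : M ∈ similitudes n := by
  have hc : 0 < √t := Real.sqrt_pos.mpr ht
  refine ⟨(√t)⁻¹ • M, √t, ?_, hc, by rw [smul_smul, mul_inv_cancel₀ hc.ne', one_smul]⟩
  rw [transpose_smul, smul_mul_smul_comm, hM, smul_smul, ← mul_inv, ← sq,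
    Real.sq_sqrt ht.le, inv_mul_cancel₀ ht.ne', one_smul]

lemma mem_similitudes_of_mem_closure {M : Matrix n n ℝ} (hM : M ∈ closure (similitudes n))
    (hdet : IsUnit M.det) : M ∈ similitudes n := by
  cases isEmpty_or_nonempty n with
  | inl _ => exact Subsingleton.elim (1 : Matrix n n ℝ) M ▸ one_mem_similitudes
  | inr _ =>
    obtain ⟨i⟩ := ‹Nonempty n›
    have hconf : Mᵀ * M = (Mᵀ * M) i i • 1 :=
      closure_minimal (fun N hN => transpose_mul_self_of_mem_similitudes hN i)
        (isClosed_setOf_transpose_mul_self_eq_smul_one i) hM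
    have hnonneg : 0 ≤ (Mᵀ * M) i i := by
      simpa only [mul_apply, transpose_apply] using
        Finset.sum_nonneg fun k _ => mul_self_nonneg (M k i)
    have hne : (Mᵀ * M) i i ≠ 0 := by
      intro h0
      have hM0 : M = 0 := by
        rw [← conjTranspose_mul_self_eq_zero, conjTranspose_eq_transpose_of_trivial, hconf, h0,
          zero_smul]
      rw [hM0, det_zero] at hdet
      exact not_isUnit_zero hdet
    exact mem_similitudes_of_transpose_mul_self_eq_smul_one (hnonneg.lt_of_ne' hne) hconf

end Matrix

/-- **The scale-free alignment discrepancy is equivalence-aware.**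
For invertible `B, B'`, the infimum over orthogonal `Q` and `c > 0` of `‖S' − cQS‖²_F`
is zero if and only if `B' = cQB` and `A₁' = cQA₁` for some orthogonal `Q` and `c > 0`,
i.e. exactly when the two structural VAR(1) models are scale-free observationally
equivalent. -/
theorem scale_free_alignment_discrepancy_zero_iff (p : ℕ)
    (B B' A₁ A₁' : Matrix (Fin p) (Fin p) ℝ)
    (hB : IsUnit B.det) (hB' : IsUnit B'.det)
    (S S' : Matrix (Fin p) (Fin p ⊕ Fin p) ℝ)
    (hS : S = Matrix.fromCols B A₁) (hS' : S' = Matrix.fromCols B' A₁') :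
    sInf {x : ℝ | ∃ (Q : Matrix (Fin p) (Fin p) ℝ) (c : ℝ),
        Qᵀ * Q = 1 ∧ 0 < c ∧ x = frobSq (S' - c • (Q * S))} = 0 ↔
    ∃ (Q : Matrix (Fin p) (Fin p) ℝ) (c : ℝ), Qᵀ * Q = 1 ∧ 0 < c ∧
      B' = c • (Q * B) ∧ A₁' = c • (Q * A₁) := by
  subst hS hS'
  have hset : {x : ℝ | ∃ (Q : Matrix (Fin p) (Fin p) ℝ) (c : ℝ),
      Qᵀ * Q = 1 ∧ 0 < c ∧ x = frobSq (fromCols B' A₁' - c • (Q * fromCols B A₁))} =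
      (fun Y => frobSq (fromCols B' A₁' - Y)) '' ((· * fromCols B A₁) '' similitudes (Fin p)) := by
    ext x
    constructor
    · rintro ⟨Q, c, hQ, hc, rfl⟩
      exact ⟨_, ⟨c • Q, ⟨Q, c, hQ, hc, rfl⟩, rfl⟩, by simp only [Matrix.smul_mul]⟩
    · rintro ⟨_, ⟨_, ⟨Q, c, hQ, hc, rfl⟩, rfl⟩, rfl⟩
      exact ⟨Q, c, hQ, hc, by simp only [Matrix.smul_mul]⟩
  rw [hset, sInf_image_frobSq_sub_eq_zero_iff (Set.image_nonempty.mpr ⟨1, one_mem_similitudes⟩),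
    (isClosedEmbedding_mul_fromCols A₁ hB).closure_image_eq]
  constructor
  · rintro ⟨M, hM, hMS⟩
    simp only [mul_fromCols, fromCols_ext_iff] at hMS
    have hdet : IsUnit M.det := isUnit_of_mul_isUnit_left (det_mul M B ▸ hMS.1 ▸ hB')
    obtain ⟨Q, c, hQ, hc, rfl⟩ := mem_similitudes_of_mem_closure hM hdet
    exact ⟨Q, c, hQ, hc, by rw [← hMS.1, Matrix.smul_mul], by rw [← hMS.2, Matrix.smul_mul]⟩
  · rintro ⟨Q, c, hQ, hc, rfl, rfl⟩
    refine ⟨c • Q, subset_closure ⟨Q, c, hQ, hc, rfl⟩, ?_⟩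
    rw [← Matrix.smul_mul, ← Matrix.smul_mul]
    exact mul_fromCols _ _ _
end

section
/- Let Φ ∈ ℝ^{p×p} have spectral radius strictly less than 1 (i.e., every complex eigenvalue of Φ has modulus < 1), and let Σᵤ ∈ ℝ^{p×p}. Then there exists a unique matrix Σ ∈ ℝ^{p×p} satisfying the Lyapunov equation Σ = Φ·Σ·Φᵀ + Σᵤ. -/
/-!
The map `S ↦ S - Φ S Φᵀ` is linear on the finite-dimensional space of matrices, so it is
bijective as soon as it is injective. If `S = Φ S Φᵀ`, then `S = Φⁿ S (Φᵀ)ⁿ` for every `n`, and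
`Φⁿ → 0` by Gelfand's formula because the spectral radius of `Φ` is `< 1`; hence `S = 0`.
-/

open Filter Topology Matrix
open scoped NNReal ENNReal

theorem tendsto_pow_atTop_nhds_zero_of_spectralRadius_lt_one {A : Type*} [NormedRing A]
    [NormedAlgebra ℂ A] [CompleteSpace A] {a : A} (ha : spectralRadius ℂ a < 1) :
    Tendsto (a ^ ·) atTop (𝓝 0) := by
  obtain ⟨r, hρr, hr1⟩ := ENNReal.lt_iff_exists_nnreal_btwn.mp ha
  have hroot : ∀ᶠ n : ℕ in atTop, (‖a ^ n‖₊ : ℝ≥0∞) ^ (1 / n : ℝ) < r :=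
    (spectrum.pow_nnnorm_pow_one_div_tendsto_nhds_spectralRadius a).eventually_lt_const hρr
  refine squeeze_zero_norm' ?_
    (tendsto_pow_atTop_nhds_zero_of_lt_one r.coe_nonneg (by exact_mod_cast hr1))
  filter_upwards [hroot, eventually_gt_atTop 0] with n hn hn0
  rw [one_div, ENNReal.rpow_inv_lt_iff (by positivity), ENNReal.rpow_natCast,
    ← ENNReal.coe_pow, ENNReal.coe_lt_coe] at hn
  exact_mod_cast hn.le

theorem eq_zero_of_eq_mul_mul_of_tendsto_pow {R : Type*} [MonoidWithZero R] [TopologicalSpace R]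
    [ContinuousMul R] [T2Space R] {a b x : R} (ha : Tendsto (a ^ ·) atTop (𝓝 0))
    (hb : Tendsto (b ^ ·) atTop (𝓝 0)) (hx : x = a * x * b) : x = 0 := by
  have hiter : ∀ n : ℕ, a ^ n * x * b ^ n = x := by
    intro n
    induction n with
    | zero => simp
    | succ k ih =>
      calc a ^ (k + 1) * x * b ^ (k + 1) = a * (a ^ k * x * b ^ k) * b := by
            rw [pow_succ' a, pow_succ b]
            simp only [mul_assoc]
        _ = x := by rw [ih, ← hx]
  have hlim : Tendsto (fun n : ℕ => a ^ n * x * b ^ n) atTop (𝓝 (0 * x * 0)) :=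
    (ha.mul_const x).mul hb
  simp only [hiter, zero_mul, mul_zero] at hlim
  exact tendsto_const_nhds_iff.mp hlim

namespace Matrix

variable {n : Type*} [Fintype n] [DecidableEq n]

section linftyOp

-- Any Banach-algebra norm on matrices would do; the statement does not mention it.
attribute [local instance] Matrix.linftyOpNormedRing Matrix.linftyOpNormedAlgebra

theorem tendsto_pow_atTop_nhds_zero_of_forall_norm_lt_one {A : Matrix n n ℂ}
    (hA : ∀ μ ∈ spectrum ℂ A, ‖μ‖ < 1) : Tendsto (A ^ ·) atTop (𝓝 0) := by
  -- The spectrum of the zero-dimensional matrix algebra is empty, so it needs a separate case.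
  rcases isEmpty_or_nonempty n with hn | hn
  · simpa only [Subsingleton.elim _ (0 : Matrix n n ℂ)] using tendsto_const_nhds
  refine tendsto_pow_atTop_nhds_zero_of_spectralRadius_lt_one ?_
  exact_mod_cast spectrum.spectralRadius_lt_of_forall_lt A (r := 1) fun μ hμ => by
    simpa [← NNReal.coe_lt_coe] using hA μ hμ

end linftyOp

theorem tendsto_pow_atTop_nhds_zero_of_forall_norm_spectrum_map_ofReal_lt_one
    {Φ : Matrix n n ℝ} (hΦ : ∀ μ ∈ spectrum ℂ (Φ.map Complex.ofReal), ‖μ‖ < 1) :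
    Tendsto (Φ ^ ·) atTop (𝓝 0) := by
  have hlim := ((continuous_id.matrix_map Complex.continuous_re).tendsto 0).comp
    (tendsto_pow_atTop_nhds_zero_of_forall_norm_lt_one hΦ)
  have hre : ∀ k : ℕ, ((Φ.map Complex.ofReal) ^ k).map Complex.re = Φ ^ k := fun k => by
    have hmap : (Φ ^ k).map Complex.ofRealHom = (Φ.map Complex.ofReal) ^ k := Φ.map_pow _ k
    rw [← hmap, map_map]
    ext
    simp
  simpa [Function.comp_def, hre] using hlim

variable {R : Type*} [CommRing R]

def lyapunovMap (A : Matrix n n R) : Matrix n n R →ₗ[R] Matrix n n R :=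
  LinearMap.id - LinearMap.mulLeft R A ∘ₗ LinearMap.mulRight R Aᵀ

@[simp]
theorem lyapunovMap_apply (A X : Matrix n n R) : lyapunovMap A X = X - A * X * Aᵀ := by
  simp [lyapunovMap, Matrix.mul_assoc]

theorem lyapunovMap_injective_of_tendsto_pow [TopologicalSpace R] [IsTopologicalRing R]
    [T2Space R] {A : Matrix n n R} (hA : Tendsto (A ^ ·) atTop (𝓝 0)) :
    Function.Injective (lyapunovMap A) := by
  have hAT : Tendsto (Aᵀ ^ ·) atTop (𝓝 0) := by
    simpa [Function.comp_def, transpose_pow] using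
      (continuous_id.matrix_transpose.tendsto 0).comp hA
  refine (injective_iff_map_eq_zero _).mpr fun X hX => ?_
  rw [lyapunovMap_apply, sub_eq_zero] at hX
  exact eq_zero_of_eq_mul_mul_of_tendsto_pow hA hAT hX

end Matrix

/-- **Existence and uniqueness for the discrete Lyapunov equation.**
If every complex eigenvalue of `Φ` has modulus `< 1` (spectral radius `< 1`), then for any
`Σᵤ` there is a unique real matrix `Σ` with `Σ = Φ Σ Φᵀ + Σᵤ`. -/
theorem lyapunov_unique_solution (p : ℕ)
    (Phi Sigma_u : Matrix (Fin p) (Fin p) ℝ)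
    (hPhi : ∀ μ ∈ spectrum ℂ (Phi.map (Complex.ofReal)), ‖μ‖ < 1) :
    ∃! Sigma : Matrix (Fin p) (Fin p) ℝ,
      Sigma = Phi * Sigma * Phiᵀ + Sigma_u := by
  have hinj : Function.Injective (lyapunovMap Phi) := lyapunovMap_injective_of_tendsto_pow
    (tendsto_pow_atTop_nhds_zero_of_forall_norm_spectrum_map_ofReal_lt_one hPhi)
  have hbij : Function.Bijective (lyapunovMap Phi) :=
    ⟨hinj, LinearMap.injective_iff_surjective.mp hinj⟩
  refine (existsUnique_congr fun S => ?_).mp (hbij.existsUnique Sigma_u)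
  rw [lyapunovMap_apply, sub_eq_iff_eq_add, add_comm]
end
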